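/- Let (M_n) be a locally square integrable real martingale with M_0 = 0 that is heavy on left. Then for all x > 0 and y > 0, P(M_n ≥ x and [M]_n ≤ y) ≤ exp(−x²/(2y)). -/

import Mathlib

/-!
For `t > 0` the process `exp (t M_n - t² [M]_n / 2)` is a supermartingale, and Markov's
inequality at `t = x / y` gives the bound. Absorbing `t` into the increments, the supermartingale
step is `E[exp (X - X² / 2) | ℱ] ≤ 1` for `X` conditionally heavy on left. Now
`exp (v - v² / 2) ≤ 1 + G v`, where `G` is the odd extension of the concave, nondecreasing,
bounded function `g v = 1 - exp (-v - v² / 2)` on `[0, ∞)` (for `v ≥ 0` this is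
`cosh v ≤ exp (v² / 2)`, for `v ≤ 0` an equality). Up to any `ε > 0`, `G` is a nonnegative
combination of truncations `T_a`: on `[0, ∞)` a piecewise linear interpolant of `g` on a fine grid
is a nonnegative combination of ramps `v ↦ min v a`. Hence `E[G X | ℱ] ≤ ε`.
-/

open MeasureTheory ProbabilityTheory Real Finset

/-- The truncated version `T_a(x) = min(|x|, a) · sign(x)` of a real number. -/
noncomputable def truncAt (a : ℝ) (x : ℝ) : ℝ := min |x| a * Real.sign x

/-- A martingale `M` is heavy on left if all its increments are conditionally heavy on left:
for all `n ≥ 1` and all `a > 0`, `E[T_a(ΔM_n) | ℱ_{n−1}] ≤ 0` almost surely. -/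
def Martingale.IsHeavyOnLeft {Ω : Type*} {m0 : MeasurableSpace Ω} (μ : Measure Ω)
    (ℱ : Filtration ℕ m0) (M : ℕ → Ω → ℝ) : Prop :=
  ∀ n : ℕ, 1 ≤ n → ∀ a : ℝ, 0 < a →
    ∀ᵐ ω ∂μ, (μ[fun ω' => truncAt a (M n ω' - M (n - 1) ω') | ℱ (n - 1)]) ω ≤ 0

open Filter Set Topology

lemma truncAt_eq_max_min {a : ℝ} (ha : 0 ≤ a) (x : ℝ) : truncAt a x = max (-a) (min x a) := by
  rcases lt_trichotomy x 0 with hx | rfl | hx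
  · rw [truncAt, Real.sign_of_neg hx, abs_of_neg hx, min_eq_left (by linarith : x ≤ a)]
    rcases le_total (-x) a with h | h
    · rw [min_eq_left h, max_eq_right (by linarith)]; ring
    · rw [min_eq_right h, max_eq_left (by linarith)]; ring
  · simp [truncAt, ha]
  · rw [truncAt, Real.sign_of_pos hx, abs_of_pos hx, mul_one,
      max_eq_right (le_min (by linarith) (by linarith))]

lemma truncAt_of_nonneg {a x : ℝ} (ha : 0 ≤ a) (hx : 0 ≤ x) : truncAt a x = min x a := by
  rw [truncAt_eq_max_min ha, max_eq_right (le_min (by linarith) (by linarith))]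

lemma truncAt_neg (a x : ℝ) : truncAt a (-x) = -truncAt a x := by
  simp [truncAt, Real.sign_neg]

lemma abs_truncAt_le {a : ℝ} (ha : 0 ≤ a) (x : ℝ) : |truncAt a x| ≤ a := by
  rw [truncAt_eq_max_min ha, abs_le]
  exact ⟨le_max_left _ _, max_le (by linarith) (min_le_right _ _)⟩

lemma continuous_truncAt {a : ℝ} (ha : 0 ≤ a) : Continuous (truncAt a) := by
  simp_rw [funext (truncAt_eq_max_min ha)]
  fun_prop

lemma truncAt_mul_mul {t : ℝ} (ht : 0 ≤ t) {a : ℝ} (ha : 0 ≤ a) (x : ℝ) :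
    truncAt (t * a) (t * x) = t * truncAt a x := by
  rw [truncAt_eq_max_min (mul_nonneg ht ha), truncAt_eq_max_min ha, mul_max_of_nonneg _ _ ht,
    mul_min_of_nonneg _ _ ht, mul_neg]

lemma ConcaveOn.slope_mul_sub_le {s : Set ℝ} {f : ℝ → ℝ} (hf : ConcaveOn ℝ s f) {x y z : ℝ}
    (hx : x ∈ s) (hy : y ∈ s) (hxz : x ≤ z) (hzy : z ≤ y) :
    (f y - f x) / (y - x) * (z - x) ≤ f z - f x := by
  rcases hxz.eq_or_lt with rfl | hxz
  · simp
  rcases hzy.eq_or_lt with rfl | hzy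
  · rw [div_mul_cancel₀ _ (by linarith)]
  have key := hf.neg.secant_mono_aux1 hx hy hxz hzy
  simp only [Pi.neg_apply] at key
  rw [div_mul_eq_mul_div, div_le_iff₀ (by linarith)]
  linarith

lemma Finset.sum_range_mul_sub_eq_sum_sub_mul (s w : ℕ → ℝ) {K : ℕ} (hw : w 0 = 0) (hs : s K = 0) :
    ∑ i ∈ range K, s i * (w (i + 1) - w i) = ∑ i ∈ range K, (s i - s (i + 1)) * w (i + 1) := by
  have h := (sum_range_succ (fun i => s i * w i) K).symm.trans
    (sum_range_succ' (fun i => s i * w i) K)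
  simp only [hw, hs, zero_mul, mul_zero, add_zero] at h
  simp only [mul_sub, sub_mul, sum_sub_distrib, h]

noncomputable def gridSlope (g : ℝ → ℝ) (δ : ℝ) (i : ℕ) : ℝ :=
  (g ((i + 1) * δ) - g (i * δ)) / δ

/-- The piecewise linear interpolation of `g` at `0, δ, …, K δ`, constant beyond `K δ`. -/
noncomputable def gridInterp (g : ℝ → ℝ) (δ : ℝ) (K : ℕ) (v : ℝ) : ℝ :=
  ∑ i ∈ range K, gridSlope g δ i * (min v ((i + 1) * δ) - min v (i * δ))

section Grid

variable {g : ℝ → ℝ} {δ : ℝ}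

lemma gridSlope_nonneg (hmono : MonotoneOn g (Ici 0)) (hδ : 0 < δ) (i : ℕ) : 0 ≤ gridSlope g δ i :=
  div_nonneg (sub_nonneg.2 (hmono (by simp; positivity) (by simp; positivity) (by gcongr; simp)))
    hδ.le

lemma ConcaveOn.gridSlope_succ_le (hconc : ConcaveOn ℝ (Ici 0) g) (hδ : 0 < δ) (i : ℕ) :
    gridSlope g δ (i + 1) ≤ gridSlope g δ i := by
  have h := hconc.slope_anti_adjacent (x := i * δ) (y := (i + 1) * δ) (z := (i + 2) * δ)
    (by simp; positivity) (by simp; positivity) (by nlinarith) (by nlinarith)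
  rw [show (i + 2 : ℝ) * δ - (i + 1) * δ = δ by ring, show (i + 1 : ℝ) * δ - i * δ = δ by ring] at h
  simpa [gridSlope, add_assoc, one_add_one_eq_two] using h

lemma ConcaveOn.gridSlope_antitone (hconc : ConcaveOn ℝ (Ici 0) g) (hδ : 0 < δ) :
    Antitone (gridSlope g δ) :=
  antitone_nat_of_succ_le (hconc.gridSlope_succ_le hδ)

lemma ConcaveOn.gridSlope_mul_le (hconc : ConcaveOn ℝ (Ici 0) g) (hδ : 0 < δ) (v : ℝ) (i : ℕ) :
    gridSlope g δ i * (min v ((i + 1) * δ) - min v (i * δ))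
      ≤ g (min v ((i + 1) * δ)) - g (min v (i * δ)) := by
  rcases le_total v (i * δ) with hvi | hvi
  · rw [min_eq_left hvi, min_eq_left (hvi.trans (by nlinarith))]
    simp
  rw [min_eq_right hvi]
  have h := hconc.slope_mul_sub_le (x := i * δ) (y := (i + 1) * δ) (z := min v ((i + 1) * δ))
    (by simp; positivity) (by simp; positivity) (le_min hvi (by nlinarith)) (min_le_right _ _)
  rwa [show (i + 1 : ℝ) * δ - i * δ = δ by ring] at h

lemma ConcaveOn.gridInterp_le (hconc : ConcaveOn ℝ (Ici 0) g) (hmono : MonotoneOn g (Ici 0))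
    (hg0 : g 0 = 0) (hδ : 0 < δ) (K : ℕ) {v : ℝ} (hv : 0 ≤ v) : gridInterp g δ K v ≤ g v := by
  have htel := sum_range_sub (fun i => g (min v (i * δ))) K
  simp only [Nat.cast_add, Nat.cast_one, Nat.cast_zero, zero_mul, min_eq_right hv] at htel
  calc gridInterp g δ K v
      ≤ ∑ i ∈ range K, (g (min v ((i + 1) * δ)) - g (min v (i * δ))) :=
        sum_le_sum fun i _ => hconc.gridSlope_mul_le hδ v i
    _ = g (min v (K * δ)) := by rw [htel, hg0, sub_zero]
    _ ≤ g v := hmono (le_min hv (by positivity)) hv (min_le_left _ _)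

lemma le_gridInterp (hmono : MonotoneOn g (Ici 0)) (hg0 : g 0 = 0) (hδ : 0 < δ) {j K : ℕ}
    (hjK : j ≤ K) {v : ℝ} (hjv : j * δ ≤ v) : g (j * δ) ≤ gridInterp g δ K v := by
  have htel := sum_range_sub (fun i => g (i * δ)) j
  simp only [Nat.cast_add, Nat.cast_one, Nat.cast_zero, zero_mul, hg0, sub_zero] at htel
  calc g (j * δ) = ∑ i ∈ range j, (g ((i + 1) * δ) - g (i * δ)) := htel.symm
    _ = ∑ i ∈ range j, gridSlope g δ i * (min v ((i + 1) * δ) - min v (i * δ)) := by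
      refine sum_congr rfl fun i hi => ?_
      have hij : (i + 1 : ℝ) ≤ j := by exact_mod_cast mem_range.1 hi
      rw [min_eq_right ((mul_le_mul_of_nonneg_right hij hδ.le).trans hjv),
        min_eq_right ((mul_le_mul_of_nonneg_right (by linarith) hδ.le).trans hjv), gridSlope,
        show (i + 1 : ℝ) * δ - i * δ = δ by ring, div_mul_cancel₀ _ hδ.ne']
    _ ≤ gridInterp g δ K v :=
      sum_le_sum_of_subset_of_nonneg (range_subset_range.2 hjK) fun i _ _ =>
        mul_nonneg (gridSlope_nonneg hmono hδ i) (sub_nonneg.2 (min_le_min le_rfl (by nlinarith)))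

lemma ConcaveOn.le_gridInterp_add (hconc : ConcaveOn ℝ (Ici 0) g) (hmono : MonotoneOn g (Ici 0))
    (hg0 : g 0 = 0) (hδ : 0 < δ) (K : ℕ) {ℓ : ℝ} (hℓ : ∀ v, 0 ≤ v → g v ≤ ℓ) {v : ℝ}
    (hv : 0 ≤ v) : g v ≤ gridInterp g δ K v + max (g δ) (ℓ - g (K * δ)) := by
  rcases le_or_gt (K * δ) v with hKv | hvK
  · have := le_gridInterp hmono hg0 hδ le_rfl hKv (K := K)
    linarith [hℓ v hv, le_max_right (g δ) (ℓ - g (K * δ))]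
  set j := ⌊v / δ⌋₊
  have hjv : j * δ ≤ v := (le_div_iff₀ hδ).1 (Nat.floor_le (by positivity))
  have hvj : v ≤ (j + 1) * δ := ((div_le_iff₀ hδ).1 (Nat.lt_floor_add_one _).le)
  have hjK : j ≤ K := by
    have : (j : ℝ) < K := lt_of_mul_lt_mul_right (hjv.trans_lt hvK) hδ.le
    exact_mod_cast this.le
  have hcell : g ((j + 1) * δ) - g (j * δ) ≤ g δ := by
    have h := hconc.gridSlope_antitone hδ (Nat.zero_le j)
    simp only [gridSlope, Nat.cast_zero, zero_add, one_mul, zero_mul, hg0, sub_zero] at h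
    rwa [div_le_div_iff_of_pos_right hδ] at h
  calc g v ≤ g ((j + 1) * δ) := hmono hv (by simp; positivity) hvj
    _ ≤ g (j * δ) + g δ := by linarith
    _ ≤ gridInterp g δ K v + max (g δ) (ℓ - g (K * δ)) :=
      add_le_add (le_gridInterp hmono hg0 hδ hjK hjv) (le_max_left _ _)

lemma ConcaveOn.exists_gridInterp_eq_sum_mul_min (hconc : ConcaveOn ℝ (Ici 0) g)
    (hmono : MonotoneOn g (Ici 0)) (hδ : 0 < δ) (K : ℕ) :
    ∃ c : ℕ → ℝ, (∀ i, 0 ≤ c i) ∧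
      ∀ v, 0 ≤ v → gridInterp g δ K v = ∑ i ∈ range K, c i * min v ((i + 1) * δ) := by
  -- summation by parts, with the slopes extended by `0` beyond the grid
  set s : ℕ → ℝ := fun i => if i < K then gridSlope g δ i else 0
  refine ⟨fun i => s i - s (i + 1), fun i => ?_, fun v hv => ?_⟩
  · simp only [s]
    split_ifs
    · exact sub_nonneg.2 (hconc.gridSlope_succ_le hδ i)
    · exact sub_nonneg.2 (by simpa using gridSlope_nonneg hmono hδ i)
    · omega
    · simp
  have h := sum_range_mul_sub_eq_sum_sub_mul s (fun i => min v (i * δ)) (K := K) (by simp [hv])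
    (by simp [s])
  simp only [Nat.cast_add, Nat.cast_one] at h
  rw [← h, gridInterp]
  exact sum_congr rfl fun i hi => by simp [s, mem_range.1 hi]

theorem ConcaveOn.exists_sum_mul_min_approx (hconc : ConcaveOn ℝ (Ici 0) g)
    (hmono : MonotoneOn g (Ici 0)) (hg0 : g 0 = 0) (hcont : ContinuousWithinAt g (Ici 0) 0)
    {ℓ : ℝ} (hlim : Tendsto g atTop (𝓝 ℓ)) {ε : ℝ} (hε : 0 < ε) :
    ∃ (K : ℕ) (a c : ℕ → ℝ), (∀ i, 0 < a i) ∧ (∀ i, 0 ≤ c i) ∧ ∀ v, 0 ≤ v →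
      ∑ i ∈ range K, c i * min v (a i) ≤ g v ∧ g v ≤ ∑ i ∈ range K, c i * min v (a i) + ε := by
  obtain ⟨δ, hgδ, hδ⟩ : ∃ δ, g δ < ε ∧ 0 < δ := by
    have h := hcont.tendsto.mono_left (nhdsWithin_mono 0 Set.Ioi_subset_Ici_self)
    rw [hg0] at h
    exact ((h.eventually (gt_mem_nhds hε)).and self_mem_nhdsWithin).exists
  obtain ⟨N, hN⟩ := (hlim.eventually (lt_mem_nhds (sub_lt_self ℓ hε))).exists_forall_of_atTop
  obtain ⟨K, hK⟩ : ∃ K : ℕ, N ≤ K * δ :=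
    ⟨⌈N / δ⌉₊, (div_le_iff₀ hδ).1 (Nat.le_ceil _)⟩
  have hℓ : ∀ v, 0 ≤ v → g v ≤ ℓ := fun v hv =>
    ge_of_tendsto hlim (eventually_atTop.2 ⟨v, fun w hw => hmono hv (hv.trans hw) hw⟩)
  obtain ⟨c, hc, hsum⟩ := hconc.exists_gridInterp_eq_sum_mul_min hmono hδ K
  refine ⟨K, fun i => (i + 1) * δ, c, fun i => by positivity, hc, fun v hv => ?_⟩
  rw [← hsum v hv]
  refine ⟨hconc.gridInterp_le hmono hg0 hδ K hv, ?_⟩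
  have herr : max (g δ) (ℓ - g (K * δ)) ≤ ε := max_le hgδ.le (by linarith [hN _ hK])
  linarith [hconc.le_gridInterp_add hmono hg0 hδ K hℓ hv]

end Grid

noncomputable def expDefect (v : ℝ) : ℝ := 1 - exp (-v - v ^ 2 / 2)

lemma expDefect_zero : expDefect 0 = 0 := by simp [expDefect]

lemma continuous_expDefect : Continuous expDefect := by unfold expDefect; fun_prop

lemma monotoneOn_expDefect : MonotoneOn expDefect (Ici 0) := by
  intro v hv w hw hvw
  simp only [Set.mem_Ici] at hv hw
  have : exp (-w - w ^ 2 / 2) ≤ exp (-v - v ^ 2 / 2) := exp_le_exp.2 (by nlinarith)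
  simp only [expDefect]; linarith

lemma concaveOn_expDefect : ConcaveOn ℝ (Ici 0) expDefect := by
  have hexp (v : ℝ) : HasDerivAt (fun w => exp (-w - w ^ 2 / 2))
      (exp (-v - v ^ 2 / 2) * (-1 - v)) v :=
    ((hasDerivAt_id' v).fun_neg.fun_sub ((hasDerivAt_pow 2 v).div_const 2)).exp.congr_deriv
      (by norm_num)
  have hd1 (v : ℝ) : HasDerivAt expDefect ((1 + v) * exp (-v - v ^ 2 / 2)) v :=
    ((hexp v).const_sub 1).congr_deriv (by ring)
  have hd2 (v : ℝ) : HasDerivAt (fun w => (1 + w) * exp (-w - w ^ 2 / 2))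
      ((1 - (1 + v) ^ 2) * exp (-v - v ^ 2 / 2)) v :=
    (((hasDerivAt_id' v).const_add 1).mul (hexp v)).congr_deriv (by ring)
  refine concaveOn_of_hasDerivWithinAt2_nonpos (convex_Ici 0) continuous_expDefect.continuousOn
    (fun v _ => (hd1 v).hasDerivWithinAt) (fun v _ => (hd2 v).hasDerivWithinAt) fun v hv => ?_
  rw [interior_Ici, Set.mem_Ioi] at hv
  exact mul_nonpos_of_nonpos_of_nonneg (by nlinarith) (exp_pos _).le

lemma tendsto_expDefect_atTop : Tendsto expDefect atTop (𝓝 1) := by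
  have h : Tendsto (fun v : ℝ => -v - v ^ 2 / 2) atTop atBot :=
    tendsto_atBot_mono (fun v => by nlinarith [sq_nonneg v]) tendsto_neg_atTop_atBot
  unfold expDefect
  simpa using (tendsto_exp_atBot.comp h).const_sub 1

lemma exp_sub_sq_le_one_add_expDefect (v : ℝ) : exp (v - v ^ 2 / 2) ≤ 1 + expDefect v := by
  have hcosh : exp v + exp (-v) ≤ 2 * exp (v ^ 2 / 2) := by
    linarith [cosh_le_exp_half_sq v, cosh_eq v]
  calc exp (v - v ^ 2 / 2)
      = (exp v + exp (-v)) * exp (-(v ^ 2 / 2)) - exp (-v - v ^ 2 / 2) := by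
        rw [add_mul, ← exp_add, ← exp_add]; ring_nf
    _ ≤ 2 * exp (v ^ 2 / 2) * exp (-(v ^ 2 / 2)) - exp (-v - v ^ 2 / 2) := by gcongr
    _ = 1 + expDefect v := by
      rw [mul_assoc, ← exp_add, add_neg_cancel, exp_zero, expDefect]; ring

lemma exp_sub_sq_eq_one_sub_expDefect_neg (v : ℝ) : exp (v - v ^ 2 / 2) = 1 - expDefect (-v) := by
  simp only [expDefect]; ring_nf

theorem exists_exp_le_one_add_sum_truncAt {ε : ℝ} (hε : 0 < ε) :
    ∃ (K : ℕ) (a c : ℕ → ℝ), (∀ i, 0 < a i) ∧ (∀ i, 0 ≤ c i) ∧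
      ∀ v, exp (v - v ^ 2 / 2) ≤ 1 + ε + ∑ i ∈ range K, c i * truncAt (a i) v := by
  obtain ⟨K, a, c, ha, hc, happrox⟩ := concaveOn_expDefect.exists_sum_mul_min_approx
    monotoneOn_expDefect expDefect_zero continuous_expDefect.continuousWithinAt
    tendsto_expDefect_atTop hε
  have hsum {w : ℝ} (hw : 0 ≤ w) :
      ∑ i ∈ range K, c i * truncAt (a i) w = ∑ i ∈ range K, c i * min w (a i) :=
    sum_congr rfl fun i _ => by rw [truncAt_of_nonneg (ha i).le hw]
  refine ⟨K, a, c, ha, hc, fun v => ?_⟩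
  rcases le_total 0 v with hv | hv
  · rw [hsum hv]
    linarith [exp_sub_sq_le_one_add_expDefect v, (happrox v hv).2]
  · have hneg : ∑ i ∈ range K, c i * truncAt (a i) v = -∑ i ∈ range K, c i * min (-v) (a i) := by
      rw [← hsum (neg_nonneg.2 hv), ← sum_neg_distrib]
      simp only [truncAt_neg, mul_neg, neg_neg]
    rw [hneg, exp_sub_sq_eq_one_sub_expDefect_neg]
    linarith [(happrox (-v) (neg_nonneg.2 hv)).1]

lemma sub_sq_div_two_le (u : ℝ) : u - u ^ 2 / 2 ≤ 1 / 2 := by nlinarith [sq_nonneg (u - 1)]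

def IsCondHeavyOnLeft {Ω : Type*} {m0 : MeasurableSpace Ω} (μ : Measure Ω) (m : MeasurableSpace Ω)
    (X : Ω → ℝ) : Prop :=
  ∀ a : ℝ, 0 < a → ∀ᵐ ω ∂μ, (μ[fun ω' => truncAt a (X ω') | m]) ω ≤ 0

section Conditional

variable {Ω : Type*} {m m0 : MeasurableSpace Ω} {μ : Measure Ω} {X : Ω → ℝ}

lemma IsCondHeavyOnLeft.const_mul (h : IsCondHeavyOnLeft μ m X) {t : ℝ} (ht : 0 < t) :
    IsCondHeavyOnLeft μ m (fun ω => t * X ω) := by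
  intro a ha
  have hscale : (fun ω => truncAt a (t * X ω)) = t • fun ω => truncAt (a / t) (X ω) := by
    ext ω
    rw [Pi.smul_apply, smul_eq_mul, ← truncAt_mul_mul ht.le (by positivity),
      mul_div_cancel₀ _ ht.ne']
  filter_upwards [condExp_smul t (fun ω => truncAt (a / t) (X ω)) m,
    h (a / t) (by positivity)] with ω hsmul hle
  rw [hscale, hsmul, Pi.smul_apply, smul_eq_mul]
  exact mul_nonpos_of_nonneg_of_nonpos ht.le hle

variable [IsFiniteMeasure μ]

lemma integrable_truncAt_comp (hX : AEStronglyMeasurable X μ) {a : ℝ} (ha : 0 ≤ a) :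
    Integrable (fun ω => truncAt a (X ω)) μ :=
  .of_bound ((continuous_truncAt ha).comp_aestronglyMeasurable hX) a
    (ae_of_all _ fun ω => abs_truncAt_le ha (X ω))

lemma integrable_exp_sub_sq_div_two (hX : AEStronglyMeasurable X μ) :
    Integrable (fun ω => exp (X ω - X ω ^ 2 / 2)) μ :=
  .of_bound (by fun_prop) (exp (1 / 2)) (ae_of_all _ fun ω => by
    rw [norm_of_nonneg (exp_pos _).le]; exact exp_le_exp.2 (sub_sq_div_two_le _))

lemma IsCondHeavyOnLeft.condExp_sum_mul_truncAt_nonpos (h : IsCondHeavyOnLeft μ m X)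
    (hX : AEStronglyMeasurable X μ) {K : ℕ} {a c : ℕ → ℝ} (ha : ∀ i, 0 < a i)
    (hc : ∀ i, 0 ≤ c i) :
    ∀ᵐ ω ∂μ, (μ[fun ω' => ∑ i ∈ range K, c i * truncAt (a i) (X ω') | m]) ω ≤ 0 := by
  have hsum := condExp_finsetSum (s := range K)
    (fun i _ => (integrable_truncAt_comp hX (ha i).le).const_mul (c i)) m
  have hterm (i : ℕ) : μ[fun ω' => c i * truncAt (a i) (X ω') | m]
      =ᵐ[μ] c i • μ[fun ω' => truncAt (a i) (X ω') | m] :=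
    condExp_smul (c i) _ m
  have hfun : (fun ω' => ∑ i ∈ range K, c i * truncAt (a i) (X ω'))
      = ∑ i ∈ range K, fun ω' => c i * truncAt (a i) (X ω') := by
    ext; simp
  filter_upwards [hsum, ae_all_iff.2 hterm, ae_all_iff.2 fun i => h (a i) (ha i)]
    with ω hsum hterm hle
  rw [hfun, hsum, Finset.sum_apply]
  refine sum_nonpos fun i _ => ?_
  rw [hterm i, Pi.smul_apply, smul_eq_mul]
  exact mul_nonpos_of_nonneg_of_nonpos (hc i) (hle i)

lemma IsCondHeavyOnLeft.condExp_exp_le_one (h : IsCondHeavyOnLeft μ m X) (hm : m ≤ m0)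
    (hX : AEStronglyMeasurable X μ) :
    ∀ᵐ ω ∂μ, (μ[fun ω' => exp (X ω' - X ω' ^ 2 / 2) | m]) ω ≤ 1 := by
  have hε : ∀ ε > 0, ∀ᵐ ω ∂μ, (μ[fun ω' => exp (X ω' - X ω' ^ 2 / 2) | m]) ω ≤ 1 + ε := by
    intro ε hε
    obtain ⟨K, a, c, ha, hc, hle⟩ := exists_exp_le_one_add_sum_truncAt hε
    have hQ : Integrable (fun ω => ∑ i ∈ range K, c i * truncAt (a i) (X ω)) μ :=
      integrable_finsetSum _ fun i _ => (integrable_truncAt_comp hX (ha i).le).const_mul (c i)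
    filter_upwards [condExp_mono (m := m) (integrable_exp_sub_sq_div_two hX)
        ((integrable_const (1 + ε)).add hQ) (ae_of_all _ fun ω => hle (X ω)),
      condExp_add (integrable_const (1 + ε)) hQ m,
      h.condExp_sum_mul_truncAt_nonpos hX ha hc] with ω hmono hadd hQle
    rw [condExp_const hm] at hadd
    simp only [Pi.add_apply] at hmono hadd
    linarith
  filter_upwards [ae_all_iff.2 fun j : ℕ => hε (1 / (j + 1)) (by positivity)] with ω hω
  refine le_of_forall_pos_lt_add fun ε hε => ?_
  obtain ⟨j, hj⟩ := exists_nat_one_div_lt hε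
  linarith [hω j]

end Conditional

lemma Martingale.IsHeavyOnLeft.isCondHeavyOnLeft_sub {Ω : Type*} {m0 : MeasurableSpace Ω}
    {μ : Measure Ω} {ℱ : Filtration ℕ m0} {M : ℕ → Ω → ℝ} (h : Martingale.IsHeavyOnLeft μ ℱ M)
    (n : ℕ) : IsCondHeavyOnLeft μ (ℱ n) (fun ω => M (n + 1) ω - M n ω) :=
  h (n + 1) n.succ_pos

section Exponential

variable {Ω : Type*} {m0 : MeasurableSpace Ω} {μ : Measure Ω} [IsFiniteMeasure μ]
  {ℱ : Filtration ℕ m0} {X : ℕ → Ω → ℝ}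

theorem supermartingale_exp_sum_sub_sq (hX : ∀ k, StronglyMeasurable[ℱ (k + 1)] (X k))
    (hheavy : ∀ k, IsCondHeavyOnLeft μ (ℱ k) (X k)) :
    Supermartingale (fun n ω => exp (∑ k ∈ range n, (X k ω - X k ω ^ 2 / 2))) ℱ μ := by
  set Z : ℕ → Ω → ℝ := fun n ω => exp (∑ k ∈ range n, (X k ω - X k ω ^ 2 / 2))
  have hadapted : StronglyAdapted ℱ Z := fun n =>
    continuous_exp.comp_stronglyMeasurable <| Finset.stronglyMeasurable_fun_sum _ fun k hk =>
      (by fun_prop : Continuous fun u : ℝ => u - u ^ 2 / 2).comp_stronglyMeasurable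
        ((hX k).mono (ℱ.mono (mem_range.1 hk)))
  have hint (n : ℕ) : Integrable (Z n) μ := by
    refine .of_bound ((hadapted n).mono (ℱ.le n)).aestronglyMeasurable (exp (n * (1 / 2)))
      (ae_of_all _ fun ω => ?_)
    rw [norm_of_nonneg (exp_pos _).le, exp_le_exp]
    simpa using sum_le_card_nsmul (range n) _ (1 / 2) fun k _ => sub_sq_div_two_le (X k ω)
  refine supermartingale_nat hadapted hint fun n => ?_
  have hXn : AEStronglyMeasurable (X n) μ := ((hX n).mono (ℱ.le _)).aestronglyMeasurable
  have hstep : Z (n + 1) = Z n * fun ω => exp (X n ω - X n ω ^ 2 / 2) := by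
    ext ω
    simp only [Z, Pi.mul_apply, ← exp_add, sum_range_succ]
  filter_upwards [condExp_mul_of_stronglyMeasurable_left (hadapted n) (hstep ▸ hint (n + 1))
      (integrable_exp_sub_sq_div_two hXn),
    (hheavy n).condExp_exp_le_one (ℱ.le n) hXn] with ω hpull hle
  rw [hstep, hpull, Pi.mul_apply]
  exact mul_le_of_le_one_right (exp_pos _).le hle

end Exponential

lemma Finset.sum_Icc_one_eq_sum_range {β : Type*} [AddCommMonoid β] (f : ℕ → β) (n : ℕ) :
    ∑ k ∈ Icc 1 n, f k = ∑ k ∈ range n, f (k + 1) := by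
  rw [range_eq_Ico, sum_Ico_add' f 0 n 1]
  rfl

lemma sum_range_mul_sub_sq_div_two (a : ℕ → ℝ) (t : ℝ) (n : ℕ) :
    ∑ k ∈ range n, (t * (a (k + 1) - a k) - (t * (a (k + 1) - a k)) ^ 2 / 2)
      = t * (a n - a 0) - t ^ 2 / 2 * ∑ k ∈ range n, (a (k + 1) - a k) ^ 2 := by
  rw [sum_sub_distrib, ← mul_sum, sum_range_sub a, mul_sum]
  simp only [mul_pow, mul_div_right_comm]

lemma sq_div_two_mul_le {x y m q : ℝ} (hx : 0 ≤ x) (hy : 0 < y) (hxm : x ≤ m) (hq : q ≤ y) :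
    x ^ 2 / (2 * y) ≤ x / y * m - (x / y) ^ 2 / 2 * q := by
  have hopt : x ^ 2 / (2 * y) = x / y * x - (x / y) ^ 2 / 2 * y := by field_simp; ring
  rw [hopt]
  have : 0 ≤ x / y := div_nonneg hx hy.le
  gcongr

lemma measure_le_ofReal_inv_of_integral_le_one {Ω : Type*} {m0 : MeasurableSpace Ω}
    {μ : Measure Ω} [IsFiniteMeasure μ] {Z : Ω → ℝ} (hZ0 : 0 ≤ᵐ[μ] Z) (hint : Integrable Z μ)
    (hZ : ∫ ω, Z ω ∂μ ≤ 1) {r : ℝ} (hr : 0 < r) : μ {ω | r ≤ Z ω} ≤ ENNReal.ofReal r⁻¹ := by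
  rw [← ofReal_measureReal]
  refine ENNReal.ofReal_le_ofReal ?_
  rw [← mul_one r⁻¹, le_inv_mul_iff₀ hr]
  exact (mul_meas_ge_le_integral_of_nonneg hZ0 hint r).trans hZ

theorem heavyOnLeft_martingale_exponential_inequality_general
    {Ω : Type*} {m0 : MeasurableSpace Ω} {μ : Measure Ω} [IsProbabilityMeasure μ]
    {ℱ : Filtration ℕ m0} {M : ℕ → Ω → ℝ}
    (hM : Martingale M ℱ μ) (hM0 : M 0 = 0)
    (hheavy : Martingale.IsHeavyOnLeft μ ℱ M)
    (n : ℕ) {x y : ℝ} (hx : 0 < x) (hy : 0 < y) :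
    μ {ω | x ≤ M n ω ∧ (∑ k ∈ Finset.Icc 1 n, (M k ω - M (k - 1) ω) ^ 2) ≤ y}
      ≤ ENNReal.ofReal (Real.exp (-x ^ 2 / (2 * y))) := by
  set t := x / y
  have hsuper := supermartingale_exp_sum_sub_sq (μ := μ)
    (fun k => ((hM.stronglyAdapted (k + 1)).sub
      ((hM.stronglyAdapted k).mono (ℱ.mono k.le_succ))).const_mul t)
    (fun k => (hheavy.isCondHeavyOnLeft_sub k).const_mul (div_pos hx hy))
  have hevent : {ω | x ≤ M n ω ∧ (∑ k ∈ Finset.Icc 1 n, (M k ω - M (k - 1) ω) ^ 2) ≤ y}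
      ⊆ {ω | exp (x ^ 2 / (2 * y)) ≤ exp (∑ k ∈ range n,
        (t * (M (k + 1) ω - M k ω) - (t * (M (k + 1) ω - M k ω)) ^ 2 / 2))} := by
    rintro ω ⟨hxM, hQ⟩
    rw [sum_Icc_one_eq_sum_range] at hQ
    simp only [Nat.add_sub_cancel] at hQ
    rw [Set.mem_ofPred_eq, exp_le_exp, sum_range_mul_sub_sq_div_two (M · ω), hM0, Pi.zero_apply,
      sub_zero]
    exact sq_div_two_mul_le hx.le hy hxM hQ
  calc _ ≤ _ := measure_mono hevent
    _ ≤ ENNReal.ofReal (exp (x ^ 2 / (2 * y)))⁻¹ :=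
      measure_le_ofReal_inv_of_integral_le_one (ae_of_all _ fun ω => (exp_pos _).le)
        (hsuper.integrable n)
        (by simpa using hsuper.setIntegral_le (Nat.zero_le n) MeasurableSet.univ) (exp_pos _)
    _ = ENNReal.ofReal (exp (-x ^ 2 / (2 * y))) := by rw [neg_div, exp_neg]

/-- Theorem 4.1: for a locally square integrable real martingale `M` with `M 0 = 0` which is
heavy on left, for all `x, y > 0`, `P(M n ≥ x, [M]_n ≤ y) ≤ exp(−x²/(2y))`. -/
theorem heavyOnLeft_martingale_exponential_inequality
    {Ω : Type*} {m0 : MeasurableSpace Ω} {μ : Measure Ω} [IsProbabilityMeasure μ]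
    {ℱ : Filtration ℕ m0} {M : ℕ → Ω → ℝ}
    (hM : Martingale M ℱ μ) (hM0 : M 0 = 0) (hMsq : ∀ n, MemLp (M n) 2 μ)
    (hheavy : Martingale.IsHeavyOnLeft μ ℱ M)
    (n : ℕ) {x y : ℝ} (hx : 0 < x) (hy : 0 < y) :
    μ {ω | x ≤ M n ω ∧ (∑ k ∈ Finset.Icc 1 n, (M k ω - M (k - 1) ω) ^ 2) ≤ y}
      ≤ ENNReal.ofReal (Real.exp (-x ^ 2 / (2 * y))) :=
  heavyOnLeft_martingale_exponential_inequality_general hM hM0 hheavy n hx hy
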